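/- For every (x₁,x₂,x₃) ∈ 𝔛 the first component of the Levi form of the CR structure of 𝔛 vanishes identically, namely |D₃₁|² = |x₁·D₁₂ + x₃·D₂₃|². -/

import Mathlib

/-!
On 𝔛 the relation `|x₂| = |x₁||x₃|` turns `x₃ D₂₃` into `|x₁|² x₃ (x̄₂x̄₃ - x̄₂ - x̄₃)`, and the
real-part relation then collapses `x₁D₁₂ + x₃D₂₃` to `x̄₂ x₁ (1 + x̄₁x̄₃ - x̄₁)`. Comparing with
`D₃₁ = |x₁|² x̄₃ (1 + x̄₁x̄₃ - x̄₁)` gives `x̄₂ D₃₁ = x̄₁ x̄₃ (x₁D₁₂ + x₃D₂₃)`, and the factors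
`x̄₂` and `x̄₁x̄₃` have the same nonzero modulus.
-/

noncomputable section

open Complex ComplexConjugate

/-- Membership in Falbel's cross-ratio variety 𝔛. -/
def memX (x₁ x₂ x₃ : ℂ) : Prop :=
  x₁ ≠ 0 ∧ x₂ ≠ 0 ∧ x₃ ≠ 0 ∧
  ‖x₂‖ = ‖x₁‖ * ‖x₃‖ ∧
  2 * (‖x₁‖) ^ 2 * x₃.re =
    (‖x₁‖) ^ 2 + (‖x₂‖) ^ 2 - 2 * x₁.re - 2 * x₂.re + 1

/-- The minor `D₂₃`. -/
def D23 (x₂ x₃ : ℂ) : ℂ :=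
  ((((‖x₂‖) ^ 2 / (‖x₃‖) ^ 2 : ℝ)) : ℂ) *
    (conj x₂ * conj x₃ - conj x₂ - conj x₃)

/-- The minor `D₃₁`. -/
def D31 (x₁ x₃ : ℂ) : ℂ :=
  conj x₃ * (((‖x₁‖) ^ 2 : ℝ) : ℂ) * (1 + conj x₁ * conj x₃ - conj x₁)

/-- The minor `D₁₂`. -/
def D12 (x₁ x₂ : ℂ) : ℂ :=
  (conj x₂ / x₁) * (1 - conj x₁ - conj x₂)

theorem mul_D12 {x₁ : ℂ} (x₂ : ℂ) (h₁ : x₁ ≠ 0) :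
    x₁ * D12 x₁ x₂ = conj x₂ * (1 - conj x₁ - conj x₂) := by
  unfold D12
  field_simp

theorem D23_eq_of_norm_eq_mul {x₁ x₂ x₃ : ℂ} (h₃ : x₃ ≠ 0) (h : ‖x₂‖ = ‖x₁‖ * ‖x₃‖) :
    D23 x₂ x₃ = x₁ * conj x₁ * (conj x₂ * conj x₃ - conj x₂ - conj x₃) := by
  have hx₃ : ‖x₃‖ ^ 2 ≠ 0 := by positivity
  rw [D23, h, mul_pow, mul_div_cancel_right₀ _ hx₃, mul_conj, Complex.sq_norm]

namespace memX

variable {x₁ x₂ x₃ : ℂ} (hx : memX x₁ x₂ x₃)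
include hx

theorem mul_conj_eq : x₂ * conj x₂ = x₁ * conj x₁ * (x₃ * conj x₃) := by
  simp only [mul_conj, ← Complex.sq_norm, hx.2.2.2.1]
  push_cast
  ring

theorem mul_conj_mul_add_conj :
    x₁ * conj x₁ * (x₃ + conj x₃) =
      x₁ * conj x₁ + x₂ * conj x₂ - (x₁ + conj x₁) - (x₂ + conj x₂) + 1 := by
  simp only [mul_conj, add_conj, ← Complex.sq_norm]
  exact_mod_cast by linear_combination hx.2.2.2.2

theorem levi_sum_eq :
    x₁ * D12 x₁ x₂ + x₃ * D23 x₂ x₃ = conj x₂ * x₁ * (1 + conj x₁ * conj x₃ - conj x₁) := by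
  rw [mul_D12 x₂ hx.1, D23_eq_of_norm_eq_mul hx.2.2.1 hx.2.2.2.1]
  linear_combination (1 - conj x₂) * hx.mul_conj_eq - conj x₂ * hx.mul_conj_mul_add_conj

theorem conj_mul_D31 :
    conj x₂ * D31 x₁ x₃ = conj x₁ * conj x₃ * (x₁ * D12 x₁ x₂ + x₃ * D23 x₂ x₃) := by
  rw [hx.levi_sum_eq, D31, Complex.sq_norm, ← mul_conj]
  ring

theorem norm_D31 : ‖D31 x₁ x₃‖ = ‖x₁ * D12 x₁ x₂ + x₃ * D23 x₂ x₃‖ := by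
  have h := congrArg norm hx.conj_mul_D31
  simp only [norm_mul, norm_conj, ← hx.2.2.2.1] at h
  exact mul_left_cancel₀ (norm_ne_zero_iff.mpr hx.2.1) h

end memX

/-- The first component of the Levi form of the CR structure of 𝔛 vanishes
identically: `L₁ = |D₃₁|² − |x₁·D₁₂ + x₃·D₂₃|² = 0` on 𝔛. -/
theorem levi_first_component_vanishes (x₁ x₂ x₃ : ℂ) (hx : memX x₁ x₂ x₃) :
    (‖D31 x₁ x₃‖) ^ 2 =
      (‖x₁ * D12 x₁ x₂ + x₃ * D23 x₂ x₃‖) ^ 2 := by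
  rw [hx.norm_D31]
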